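/- arXiv:2402.09098 — 3 statements merged into one kernel-verified Lean document; each statement's English description precedes it below -/
import Mathlib

section
/- Let X₁, X₂, Y₁, Y₂ be square-integrable random vectors in ℝ^d. Then |⟨⟨P^{X₁},P^{X₂}⟩⟩ − ⟨⟨P^{Y₁},P^{Y₂}⟩⟩| ≤ (E‖Y₂‖²)^{1/2} · W₂(P^{X₁}, P^{Y₁}) + (E‖X₁‖²)^{1/2} · W₂(P^{X₂}, P^{Y₂}), where ⟨⟨P,Q⟩⟩ denotes the Wasserstein product sup_{γ ∈ C(P,Q)} ∫⟨x,y⟩dγ and W₂ is the 2-Wasserstein distance. -/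
open MeasureTheory

noncomputable section

/-- `γ` is a coupling of `P` and `Q`. -/
def IsCoupling {α β : Type*} [MeasurableSpace α] [MeasurableSpace β]
    (γ : Measure (α × β)) (P : Measure α) (Q : Measure β) : Prop :=
  γ.map Prod.fst = P ∧ γ.map Prod.snd = Q

/-- The Wasserstein product `⟨⟨P,Q⟩⟩`. -/
def wip {d : ℕ} (P Q : Measure (EuclideanSpace ℝ (Fin d))) : ℝ :=
  sSup {r | ∃ γ : Measure (EuclideanSpace ℝ (Fin d) × EuclideanSpace ℝ (Fin d)),
    IsCoupling γ P Q ∧ r = ∫ z, (inner ℝ z.1 z.2 : ℝ) ∂γ}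

/-- The squared 2-Wasserstein distance. -/
def W2sq {d : ℕ} (P Q : Measure (EuclideanSpace ℝ (Fin d))) : ℝ :=
  sInf {r | ∃ γ : Measure (EuclideanSpace ℝ (Fin d) × EuclideanSpace ℝ (Fin d)),
    IsCoupling γ P Q ∧ r = ∫ z, ‖z.1 - z.2‖ ^ 2 ∂γ}

/-!
Gluing couplings of `(P₁, Q₁)` and of `(P₂, Q₂)` onto any coupling of `(P₁, P₂)` (or of `(Q₁, Q₂)`)
yields random vectors `X₁, X₂, Y₁, Y₂` on one probability space with `(Xᵢ, Yᵢ)` distributed as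
the given couplings. Then `⟪X₁, X₂⟫ - ⟪Y₁, Y₂⟫ = ⟪X₁ - Y₁, Y₂⟫ + ⟪X₁, X₂ - Y₂⟫`, and
Cauchy–Schwarz bounds the expectation of the right side by
`‖Y₂‖₂ ‖X₁ - Y₁‖₂ + ‖X₁‖₂ ‖X₂ - Y₂‖₂`. As `(Y₁, Y₂)` (resp. `(X₁, X₂)`) is again a coupling, a
supremum over the base coupling and an infimum over the two glued ones give the bound.
-/

section InnerProduct

variable {α F : Type*} [MeasurableSpace α] [NormedAddCommGroup F] {ν : Measure α} {f g : α → F}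

lemma integral_norm_mul_norm_le (hf : MemLp f 2 ν) (hg : MemLp g 2 ν) :
    ∫ a, ‖f a‖ * ‖g a‖ ∂ν ≤ √(∫ a, ‖f a‖ ^ 2 ∂ν) * √(∫ a, ‖g a‖ ^ 2 ∂ν) := by
  simpa [Real.sqrt_eq_rpow] using
    integral_mul_norm_le_Lp_mul_Lq Real.HolderConjugate.two_two (by simpa using hf)
      (by simpa using hg)

variable [InnerProductSpace ℝ F]

lemma integrable_inner_of_memLp_two (hf : MemLp f 2 ν) (hg : MemLp g 2 ν) :
    Integrable (fun a => inner ℝ (f a) (g a)) ν :=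
  (hf.norm.integrable_mul hg.norm).mono' (hf.1.inner hg.1)
    (.of_forall fun a => by simpa using abs_real_inner_le_norm (f a) (g a))

lemma abs_integral_inner_le (hf : MemLp f 2 ν) (hg : MemLp g 2 ν) :
    |∫ a, inner ℝ (f a) (g a) ∂ν| ≤ √(∫ a, ‖f a‖ ^ 2 ∂ν) * √(∫ a, ‖g a‖ ^ 2 ∂ν) :=
  calc |∫ a, inner ℝ (f a) (g a) ∂ν| ≤ ∫ a, ‖f a‖ * ‖g a‖ ∂ν :=
        abs_integral_le_integral_abs.trans <| integral_mono
          (integrable_inner_of_memLp_two hf hg).abs (hf.norm.integrable_mul hg.norm)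
          fun a => abs_real_inner_le_norm (f a) (g a)
    _ ≤ _ := integral_norm_mul_norm_le hf hg

lemma abs_integral_inner_sub_integral_inner_le {f₁ f₂ g₁ g₂ : α → F}
    (hf₁ : MemLp f₁ 2 ν) (hf₂ : MemLp f₂ 2 ν) (hg₁ : MemLp g₁ 2 ν) (hg₂ : MemLp g₂ 2 ν) :
    |∫ a, inner ℝ (f₁ a) (f₂ a) ∂ν - ∫ a, inner ℝ (g₁ a) (g₂ a) ∂ν|
      ≤ √(∫ a, ‖g₂ a‖ ^ 2 ∂ν) * √(∫ a, ‖f₁ a - g₁ a‖ ^ 2 ∂ν)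
        + √(∫ a, ‖f₁ a‖ ^ 2 ∂ν) * √(∫ a, ‖f₂ a - g₂ a‖ ^ 2 ∂ν) := by
  have hd₁ : MemLp (fun a => f₁ a - g₁ a) 2 ν := hf₁.sub hg₁
  have hd₂ : MemLp (fun a => f₂ a - g₂ a) 2 ν := hf₂.sub hg₂
  have hsplit : ∫ a, inner ℝ (f₁ a) (f₂ a) ∂ν - ∫ a, inner ℝ (g₁ a) (g₂ a) ∂ν
      = ∫ a, inner ℝ (f₁ a - g₁ a) (g₂ a) ∂ν + ∫ a, inner ℝ (f₁ a) (f₂ a - g₂ a) ∂ν := by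
    rw [← integral_sub (integrable_inner_of_memLp_two hf₁ hf₂)
        (integrable_inner_of_memLp_two hg₁ hg₂),
      ← integral_add (integrable_inner_of_memLp_two hd₁ hg₂)
        (integrable_inner_of_memLp_two hf₁ hd₂)]
    congr 1 with a
    simp only [inner_sub_left, inner_sub_right]
    ring
  rw [hsplit, mul_comm √(∫ a, ‖g₂ a‖ ^ 2 ∂ν)]
  exact (abs_add_le _ _).trans
    (add_le_add (abs_integral_inner_le hd₁ hg₂) (abs_integral_inner_le hf₁ hd₂))

end InnerProduct

lemma memLp_id_map_of_integrable_sq_norm {Ω F : Type*} [MeasurableSpace Ω] [NormedAddCommGroup F]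
    [MeasurableSpace F] [OpensMeasurableSpace F] [SecondCountableTopology F] {μ : Measure Ω}
    {X : Ω → F} (hX : AEMeasurable X μ) (h : Integrable (fun ω => ‖X ω‖ ^ 2) μ) :
    MemLp id 2 (μ.map X) :=
  (memLp_map_measure_iff aestronglyMeasurable_id hX).2
    ((memLp_two_iff_integrable_sq_norm hX.aestronglyMeasurable).2 h)

open ProbabilityTheory

section Gluing

variable {α β α' β' : Type*} [MeasurableSpace α] [MeasurableSpace β] [MeasurableSpace α']
  [MeasurableSpace β']

lemma map_prodMap_fst_compProd_parallelComp (γ : Measure (α × β)) [IsFiniteMeasure γ]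
    (κ : Kernel α α') [IsMarkovKernel κ] (η : Kernel β β') [IsMarkovKernel η] :
    (γ ⊗ₘ (κ ∥ₖ η)).map (Prod.map Prod.fst Prod.fst) = γ.fst ⊗ₘ κ := by
  refine Measure.ext_prod fun {s t} hs ht => ?_
  rw [Measure.map_apply (by fun_prop) (hs.prod ht), Set.preimage_prod_map_prod,
    ← Set.prod_univ, ← Set.prod_univ,
    Measure.compProd_apply_prod (hs.prod .univ) (ht.prod .univ), Measure.compProd_apply_prod hs ht,
    Measure.fst, setLIntegral_map hs (κ.measurable_coe ht) measurable_fst, Set.prod_univ]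
  simp [Kernel.parallelComp_apply_prod]

lemma map_prodMap_snd_compProd_parallelComp (γ : Measure (α × β)) [IsFiniteMeasure γ]
    (κ : Kernel α α') [IsMarkovKernel κ] (η : Kernel β β') [IsMarkovKernel η] :
    (γ ⊗ₘ (κ ∥ₖ η)).map (Prod.map Prod.snd Prod.snd) = γ.snd ⊗ₘ η := by
  refine Measure.ext_prod fun {s t} hs ht => ?_
  rw [Measure.map_apply (by fun_prop) (hs.prod ht), Set.preimage_prod_map_prod,
    ← Set.univ_prod, ← Set.univ_prod,
    Measure.compProd_apply_prod (MeasurableSet.univ.prod hs) (MeasurableSet.univ.prod ht),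
    Measure.compProd_apply_prod hs ht,
    Measure.snd, setLIntegral_map hs (η.measurable_coe ht) measurable_snd, Set.univ_prod]
  simp [Kernel.parallelComp_apply_prod]

/-- The gluing lemma: run the conditional kernels of `π₁` and `π₂` independently on the two
coordinates of `γ`. -/
lemma exists_gluing [StandardBorelSpace α'] [Nonempty α'] [StandardBorelSpace β'] [Nonempty β']
    (γ : Measure (α × β)) [IsFiniteMeasure γ]
    (π₁ : Measure (α × α')) [IsFiniteMeasure π₁] (π₂ : Measure (β × β')) [IsFiniteMeasure π₂]
    (h₁ : π₁.fst = γ.fst) (h₂ : π₂.fst = γ.snd) :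
    ∃ ξ : Measure ((α × β) × (α' × β')), ξ.map Prod.fst = γ ∧
      ξ.map (Prod.map Prod.fst Prod.fst) = π₁ ∧ ξ.map (Prod.map Prod.snd Prod.snd) = π₂ := by
  refine ⟨γ ⊗ₘ (π₁.condKernel ∥ₖ π₂.condKernel), Measure.fst_compProd _ _, ?_, ?_⟩
  · rw [map_prodMap_fst_compProd_parallelComp, ← h₁, π₁.disintegrate]
  · rw [map_prodMap_snd_compProd_parallelComp, ← h₂, π₂.disintegrate]

lemma exists_gluing_of_snd [StandardBorelSpace α] [Nonempty α] [StandardBorelSpace β] [Nonempty β]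
    (γ : Measure (α' × β')) [IsFiniteMeasure γ]
    (π₁ : Measure (α × α')) [IsFiniteMeasure π₁] (π₂ : Measure (β × β')) [IsFiniteMeasure π₂]
    (h₁ : π₁.snd = γ.fst) (h₂ : π₂.snd = γ.snd) :
    ∃ ξ : Measure ((α × β) × (α' × β')), ξ.map Prod.snd = γ ∧
      ξ.map (Prod.map Prod.fst Prod.fst) = π₁ ∧ ξ.map (Prod.map Prod.snd Prod.snd) = π₂ := by
  obtain ⟨ξ, hγ, hπ₁, hπ₂⟩ := exists_gluing γ (π₁.map Prod.swap) (π₂.map Prod.swap)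
    (by rwa [Measure.fst_map_swap]) (by rwa [Measure.fst_map_swap])
  refine ⟨ξ.map Prod.swap, ?_, ?_, ?_⟩
  · rwa [Measure.map_map measurable_snd measurable_swap]
  · rw [Measure.map_map (by fun_prop) measurable_swap]
    change ξ.map (Prod.swap ∘ Prod.map Prod.fst Prod.fst) = π₁
    rw [← Measure.map_map measurable_swap (by fun_prop), hπ₁,
      Measure.map_map measurable_swap measurable_swap, Prod.swap_swap_eq, Measure.map_id]
  · rw [Measure.map_map (by fun_prop) measurable_swap]
    change ξ.map (Prod.swap ∘ Prod.map Prod.snd Prod.snd) = π₂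
    rw [← Measure.map_map measurable_swap (by fun_prop), hπ₂,
      Measure.map_map measurable_swap measurable_swap, Prod.swap_swap_eq, Measure.map_id]

end Gluing

section Coupling

variable {α β : Type*} [MeasurableSpace α] [MeasurableSpace β]

lemma isCoupling_prod (P : Measure α) (Q : Measure β) [IsProbabilityMeasure P]
    [IsProbabilityMeasure Q] : IsCoupling (P.prod Q) P Q :=
  ⟨Measure.fst_prod, Measure.snd_prod⟩

lemma IsCoupling.isProbabilityMeasure {γ : Measure (α × β)} {P : Measure α} {Q : Measure β}
    [IsProbabilityMeasure P] (h : IsCoupling γ P Q) : IsProbabilityMeasure γ := by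
  have : IsProbabilityMeasure (γ.map Prod.fst) := h.1 ▸ ‹_›
  exact γ.isProbabilityMeasure_of_map Prod.fst

variable {α' β' : Type*} [MeasurableSpace α'] [MeasurableSpace β']
  {ξ : Measure ((α × β) × (α' × β'))} {P₁ : Measure α} {P₂ : Measure β} {Q₁ : Measure α'}
  {Q₂ : Measure β'}

lemma isCoupling_map_fst (h₁ : IsCoupling (ξ.map (Prod.map Prod.fst Prod.fst)) P₁ Q₁)
    (h₂ : IsCoupling (ξ.map (Prod.map Prod.snd Prod.snd)) P₂ Q₂) :
    IsCoupling (ξ.map Prod.fst) P₁ P₂ := by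
  constructor
  · rw [← h₁.1, Measure.map_map measurable_fst measurable_fst,
      Measure.map_map measurable_fst (by fun_prop)]
    rfl
  · rw [← h₂.1, Measure.map_map measurable_snd measurable_fst,
      Measure.map_map measurable_fst (by fun_prop)]
    rfl

lemma isCoupling_map_snd (h₁ : IsCoupling (ξ.map (Prod.map Prod.fst Prod.fst)) P₁ Q₁)
    (h₂ : IsCoupling (ξ.map (Prod.map Prod.snd Prod.snd)) P₂ Q₂) :
    IsCoupling (ξ.map Prod.snd) Q₁ Q₂ := by
  constructor
  · rw [← h₁.2, Measure.map_map measurable_fst measurable_snd,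
      Measure.map_map measurable_snd (by fun_prop)]
    rfl
  · rw [← h₂.2, Measure.map_map measurable_snd measurable_snd,
      Measure.map_map measurable_snd (by fun_prop)]
    rfl

end Coupling

section Wasserstein

variable {d : ℕ}

local notation "E" => EuclideanSpace ℝ (Fin d)

lemma integral_inner_le_of_isCoupling {P Q : Measure E} {γ : Measure (E × E)}
    (hP : MemLp id 2 P) (hQ : MemLp id 2 Q) (h : IsCoupling γ P Q) :
    ∫ z, inner ℝ z.1 z.2 ∂γ ≤ √(∫ x, ‖x‖ ^ 2 ∂P) * √(∫ y, ‖y‖ ^ 2 ∂Q) := by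
  rw [← h.1] at hP ⊢
  rw [← h.2] at hQ ⊢
  rw [integral_map (by fun_prop) (by fun_prop), integral_map (by fun_prop) (by fun_prop)]
  exact (le_abs_self _).trans
    (abs_integral_inner_le (hP.comp_of_map (by fun_prop)) (hQ.comp_of_map (by fun_prop)))

lemma le_wip {P Q : Measure E} {γ : Measure (E × E)} (hP : MemLp id 2 P) (hQ : MemLp id 2 Q)
    (h : IsCoupling γ P Q) : ∫ z, inner ℝ z.1 z.2 ∂γ ≤ wip P Q := by
  refine le_csSup ⟨√(∫ x, ‖x‖ ^ 2 ∂P) * √(∫ y, ‖y‖ ^ 2 ∂Q), ?_⟩ ⟨γ, h, rfl⟩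
  rintro _ ⟨γ', h', rfl⟩
  exact integral_inner_le_of_isCoupling hP hQ h'

lemma wip_le {P Q : Measure E} [IsProbabilityMeasure P] [IsProbabilityMeasure Q] {B : ℝ}
    (hB : ∀ γ, IsCoupling γ P Q → ∫ z, inner ℝ z.1 z.2 ∂γ ≤ B) : wip P Q ≤ B := by
  refine csSup_le ⟨_, P.prod Q, isCoupling_prod P Q, rfl⟩ ?_
  rintro _ ⟨γ, h, rfl⟩
  exact hB γ h

lemma le_mul_sqrt_W2sq {P Q : Measure E} [IsProbabilityMeasure P] [IsProbabilityMeasure Q]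
    {a c : ℝ} (hc : 0 ≤ c) (h : ∀ ρ, IsCoupling ρ P Q → a ≤ c * √(∫ z, ‖z.1 - z.2‖ ^ 2 ∂ρ)) :
    a ≤ c * √(W2sq P Q) := by
  have hne : {r | ∃ ρ : Measure (E × E), IsCoupling ρ P Q ∧ r = ∫ z, ‖z.1 - z.2‖ ^ 2 ∂ρ}.Nonempty :=
    ⟨_, P.prod Q, isCoupling_prod P Q, rfl⟩
  have hbdd : BddBelow
      {r | ∃ ρ : Measure (E × E), IsCoupling ρ P Q ∧ r = ∫ z, ‖z.1 - z.2‖ ^ 2 ∂ρ} := by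
    refine ⟨0, ?_⟩
    rintro _ ⟨ρ, -, rfl⟩
    exact integral_nonneg fun z => by positivity
  have hmono : Monotone fun r : ℝ => c * √r := fun _ _ hrs =>
    mul_le_mul_of_nonneg_left (Real.sqrt_le_sqrt hrs) hc
  rw [W2sq, hmono.map_csInf_of_continuousAt (by fun_prop) hne hbdd]
  refine le_csInf (hne.image _) ?_
  rintro _ ⟨_, ⟨ρ, hρ, rfl⟩, rfl⟩
  exact h ρ hρ

lemma abs_integral_inner_map_fst_sub_map_snd_le {ξ : Measure ((E × E) × (E × E))}
    {P₁ P₂ Q₁ Q₂ : Measure E}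
    (hξ₁ : IsCoupling (ξ.map (Prod.map Prod.fst Prod.fst)) P₁ Q₁)
    (hξ₂ : IsCoupling (ξ.map (Prod.map Prod.snd Prod.snd)) P₂ Q₂)
    (hP₁ : MemLp id 2 P₁) (hP₂ : MemLp id 2 P₂) (hQ₁ : MemLp id 2 Q₁) (hQ₂ : MemLp id 2 Q₂) :
    |∫ z, inner ℝ z.1 z.2 ∂(ξ.map Prod.fst) - ∫ z, inner ℝ z.1 z.2 ∂(ξ.map Prod.snd)|
      ≤ √(∫ y, ‖y‖ ^ 2 ∂Q₂) * √(∫ z, ‖z.1 - z.2‖ ^ 2 ∂(ξ.map (Prod.map Prod.fst Prod.fst)))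
        + √(∫ x, ‖x‖ ^ 2 ∂P₁) * √(∫ z, ‖z.1 - z.2‖ ^ 2 ∂(ξ.map (Prod.map Prod.snd Prod.snd))) := by
  have law₁₁ : ξ.map (fun z => z.1.1) = P₁ := by
    rw [← (isCoupling_map_fst hξ₁ hξ₂).1, Measure.map_map measurable_fst measurable_fst]; rfl
  have law₁₂ : ξ.map (fun z => z.1.2) = P₂ := by
    rw [← (isCoupling_map_fst hξ₁ hξ₂).2, Measure.map_map measurable_snd measurable_fst]; rfl
  have law₂₁ : ξ.map (fun z => z.2.1) = Q₁ := by
    rw [← (isCoupling_map_snd hξ₁ hξ₂).1, Measure.map_map measurable_fst measurable_snd]; rfl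
  have law₂₂ : ξ.map (fun z => z.2.2) = Q₂ := by
    rw [← (isCoupling_map_snd hξ₁ hξ₂).2, Measure.map_map measurable_snd measurable_snd]; rfl
  subst law₁₁ law₁₂ law₂₁ law₂₂
  rw [integral_map, integral_map, integral_map, integral_map, integral_map, integral_map]
  · exact abs_integral_inner_sub_integral_inner_le (hP₁.comp_of_map (by fun_prop))
      (hP₂.comp_of_map (by fun_prop)) (hQ₁.comp_of_map (by fun_prop))
      (hQ₂.comp_of_map (by fun_prop))
  all_goals fun_prop

lemma abs_wip_sub_wip_le_of_isCoupling {P₁ P₂ Q₁ Q₂ : Measure E} [IsProbabilityMeasure P₁]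
    [IsProbabilityMeasure P₂] [IsProbabilityMeasure Q₁] [IsProbabilityMeasure Q₂]
    (hP₁ : MemLp id 2 P₁) (hP₂ : MemLp id 2 P₂) (hQ₁ : MemLp id 2 Q₁) (hQ₂ : MemLp id 2 Q₂)
    {ρ₁ ρ₂ : Measure (E × E)} (hρ₁ : IsCoupling ρ₁ P₁ Q₁) (hρ₂ : IsCoupling ρ₂ P₂ Q₂) :
    |wip P₁ P₂ - wip Q₁ Q₂|
      ≤ √(∫ y, ‖y‖ ^ 2 ∂Q₂) * √(∫ z, ‖z.1 - z.2‖ ^ 2 ∂ρ₁)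
        + √(∫ x, ‖x‖ ^ 2 ∂P₁) * √(∫ z, ‖z.1 - z.2‖ ^ 2 ∂ρ₂) := by
  have := hρ₁.isProbabilityMeasure
  have := hρ₂.isProbabilityMeasure
  rw [abs_sub_le_iff, sub_le_iff_le_add', sub_le_iff_le_add']
  constructor
  · refine wip_le fun γ hγ => ?_
    have := hγ.isProbabilityMeasure
    obtain ⟨ξ, rfl, rfl, rfl⟩ := exists_gluing γ ρ₁ ρ₂ (hρ₁.1.trans hγ.1.symm)
      (hρ₂.1.trans hγ.2.symm)
    have h := abs_integral_inner_map_fst_sub_map_snd_le hρ₁ hρ₂ hP₁ hP₂ hQ₁ hQ₂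
    have hwip := le_wip hQ₁ hQ₂ (isCoupling_map_snd hρ₁ hρ₂)
    linarith [le_abs_self (∫ z, inner ℝ z.1 z.2 ∂(ξ.map Prod.fst)
      - ∫ z, inner ℝ z.1 z.2 ∂(ξ.map Prod.snd))]
  · refine wip_le fun γ hγ => ?_
    have := hγ.isProbabilityMeasure
    obtain ⟨ξ, rfl, rfl, rfl⟩ := exists_gluing_of_snd γ ρ₁ ρ₂ (hρ₁.2.trans hγ.1.symm)
      (hρ₂.2.trans hγ.2.symm)
    have h := abs_integral_inner_map_fst_sub_map_snd_le hρ₁ hρ₂ hP₁ hP₂ hQ₁ hQ₂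
    have hwip := le_wip hP₁ hP₂ (isCoupling_map_fst hρ₁ hρ₂)
    linarith [neg_abs_le (∫ z, inner ℝ z.1 z.2 ∂(ξ.map Prod.fst)
      - ∫ z, inner ℝ z.1 z.2 ∂(ξ.map Prod.snd))]

lemma abs_wip_sub_wip_le {P₁ P₂ Q₁ Q₂ : Measure E} [IsProbabilityMeasure P₁]
    [IsProbabilityMeasure P₂] [IsProbabilityMeasure Q₁] [IsProbabilityMeasure Q₂]
    (hP₁ : MemLp id 2 P₁) (hP₂ : MemLp id 2 P₂) (hQ₁ : MemLp id 2 Q₁) (hQ₂ : MemLp id 2 Q₂) :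
    |wip P₁ P₂ - wip Q₁ Q₂|
      ≤ √(∫ y, ‖y‖ ^ 2 ∂Q₂) * √(W2sq P₁ Q₁) + √(∫ x, ‖x‖ ^ 2 ∂P₁) * √(W2sq P₂ Q₂) := by
  have h₁ : ∀ ρ₂, IsCoupling ρ₂ P₂ Q₂ → |wip P₁ P₂ - wip Q₁ Q₂|
      - √(∫ x, ‖x‖ ^ 2 ∂P₁) * √(∫ z, ‖z.1 - z.2‖ ^ 2 ∂ρ₂) ≤ √(∫ y, ‖y‖ ^ 2 ∂Q₂) * √(W2sq P₁ Q₁) :=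
    fun ρ₂ hρ₂ => le_mul_sqrt_W2sq (Real.sqrt_nonneg _) fun ρ₁ hρ₁ => by
      linarith [abs_wip_sub_wip_le_of_isCoupling hP₁ hP₂ hQ₁ hQ₂ hρ₁ hρ₂]
  have h₂ := le_mul_sqrt_W2sq (P := P₂) (Q := Q₂) (Real.sqrt_nonneg (∫ x, ‖x‖ ^ 2 ∂P₁))
    (a := |wip P₁ P₂ - wip Q₁ Q₂| - √(∫ y, ‖y‖ ^ 2 ∂Q₂) * √(W2sq P₁ Q₁))
    fun ρ₂ hρ₂ => by linarith [h₁ ρ₂ hρ₂]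
  linarith

end Wasserstein

theorem stmt_5 {d : ℕ} {Ω : Type*} [MeasurableSpace Ω] (μ : Measure Ω)
    [IsProbabilityMeasure μ]
    (X₁ X₂ Y₁ Y₂ : Ω → EuclideanSpace ℝ (Fin d))
    (hX₁ : Measurable X₁) (hX₂ : Measurable X₂) (hY₁ : Measurable Y₁) (hY₂ : Measurable Y₂)
    (hX₁2 : Integrable (fun ω => ‖X₁ ω‖ ^ 2) μ) (hX₂2 : Integrable (fun ω => ‖X₂ ω‖ ^ 2) μ)
    (hY₁2 : Integrable (fun ω => ‖Y₁ ω‖ ^ 2) μ) (hY₂2 : Integrable (fun ω => ‖Y₂ ω‖ ^ 2) μ) :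
    |wip (μ.map X₁) (μ.map X₂) - wip (μ.map Y₁) (μ.map Y₂)|
      ≤ Real.sqrt (∫ ω, ‖Y₂ ω‖ ^ 2 ∂μ) * Real.sqrt (W2sq (μ.map X₁) (μ.map Y₁))
        + Real.sqrt (∫ ω, ‖X₁ ω‖ ^ 2 ∂μ) * Real.sqrt (W2sq (μ.map X₂) (μ.map Y₂)) := by
  have := Measure.isProbabilityMeasure_map (μ := μ) hX₁.aemeasurable
  have := Measure.isProbabilityMeasure_map (μ := μ) hX₂.aemeasurable
  have := Measure.isProbabilityMeasure_map (μ := μ) hY₁.aemeasurable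
  have := Measure.isProbabilityMeasure_map (μ := μ) hY₂.aemeasurable
  rw [← integral_map (f := fun y => ‖y‖ ^ 2) hY₂.aemeasurable (by fun_prop),
    ← integral_map (f := fun x => ‖x‖ ^ 2) hX₁.aemeasurable (by fun_prop)]
  exact abs_wip_sub_wip_le (memLp_id_map_of_integrable_sq_norm hX₁.aemeasurable hX₁2)
    (memLp_id_map_of_integrable_sq_norm hX₂.aemeasurable hX₂2)
    (memLp_id_map_of_integrable_sq_norm hY₁.aemeasurable hY₁2)
    (memLp_id_map_of_integrable_sq_norm hY₂.aemeasurable hY₂2)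
end
end

section
/- Let G = (V, E) with V = {1,…,L} be a simple undirected acyclic graph. Let (𝒳_i, Ω_i, ν_i), i ∈ V, be probability spaces, and for each edge (i,j) ∈ E let ξ_{i,j} be a probability measure on 𝒳_i × 𝒳_j whose marginals are ν_i and ν_j. Then there exists a probability measure ρ on the product ∏_{i∈V} 𝒳_i such that the i-th marginal of ρ is ν_i for all i ∈ V, and the (i,j)-marginal of ρ equals ξ_{i,j} for all (i,j) ∈ E. -/
/-!
Glue the vertices in one at a time. In an acyclic graph every nonempty finite vertex set `S`
contains a vertex `v` with at most one neighbour `u` in `S`, the end of a longest path inside `S`.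
Given a measure glued on `S \ {v}`, redraw its `v`-th coordinate from the disintegration kernel
of `ξ u v` with respect to `ν u`, evaluated at the `u`-th coordinate (or independently from `ν v`
if `v` has no neighbour in `S`). This leaves every marginal not involving `v` unchanged and makes
the `(u, v)`-marginal `ν u ⊗ κ = ξ u v`.
-/

open MeasureTheory ProbabilityTheory

namespace SimpleGraph

theorem IsAcyclic.exists_mem_subsingleton_neighborSet_inter {V : Type*} {G : SimpleGraph V}
    (hG : G.IsAcyclic) {S : Finset V} (hS : S.Nonempty) :
    ∃ v ∈ S, (G.neighborSet v ∩ S).Subsingleton := by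
  classical
  let lengths : Set ℕ :=
    {n | ∃ (a b : V) (p : G.Walk a b), p.IsPath ∧ p.support.toFinset ⊆ S ∧ p.length = n}
  obtain ⟨v, hv⟩ := hS
  have hne : lengths.Nonempty := ⟨0, v, v, .nil, .nil, by simpa, rfl⟩
  have hbdd : BddAbove lengths := by
    refine ⟨S.card, ?_⟩
    rintro _ ⟨a, b, p, hp, hpS, rfl⟩
    have := Finset.card_le_card hpS
    rw [List.toFinset_card_of_nodup hp.support_nodup, Walk.length_support] at this
    omega
  obtain ⟨a, b, p, hp, hpS, hlen⟩ := Nat.sSup_mem hne hbdd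
  -- A neighbour of `a` in `S` off the longest path would extend it.
  have eq_snd : ∀ w ∈ S, G.Adj a w → w = p.snd := fun w hw haw ↦ by
    refine hG.eq_snd_of_adj_start hp haw (by_contra fun hwp ↦ ?_)
    have hlong : (Walk.cons haw.symm p).length ∈ lengths :=
      ⟨w, b, _, hp.cons hwp, by simpa [Finset.insert_subset_iff] using ⟨hw, hpS⟩, rfl⟩
    have := le_csSup hbdd hlong
    rw [Walk.length_cons, hlen] at this
    omega
  exact ⟨a, hpS (by simp), fun c ⟨hac, hc⟩ d ⟨had, hd⟩ ↦
    (eq_snd c hc hac).trans (eq_snd d hd had).symm⟩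

end SimpleGraph

lemma MeasureTheory.Measure.map_prodMap_compProd_comap {α β γ : Type*} [MeasurableSpace α]
    [MeasurableSpace β] [MeasurableSpace γ] (μ : Measure α) [SFinite μ] (κ : Kernel β γ)
    [IsSFiniteKernel κ] {g : α → β} (hg : Measurable g) :
    (μ ⊗ₘ κ.comap g hg).map (Prod.map g id) = μ.map g ⊗ₘ κ := by
  ext s hs
  rw [Measure.map_apply (hg.prodMap measurable_id) hs,
    Measure.compProd_apply (hs.preimage (hg.prodMap measurable_id)),
    Measure.compProd_apply hs, lintegral_map (Kernel.measurable_kernel_prodMk_left hs) hg]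
  rfl

section Resample

variable {ι : Type*} [DecidableEq ι] {X : ι → Type*} [∀ i, MeasurableSpace (X i)]

noncomputable def resample (ρ : Measure (∀ i, X i)) (v : ι) (η : Kernel (∀ i, X i) (X v)) :
    Measure (∀ i, X i) :=
  (ρ ⊗ₘ η).map fun p ↦ Function.update p.1 v p.2

variable {ρ : Measure (∀ i, X i)} {v : ι} {η : Kernel (∀ i, X i) (X v)}

instance [IsProbabilityMeasure ρ] [IsMarkovKernel η] : IsProbabilityMeasure (resample ρ v η) :=
  Measure.isProbabilityMeasure_map measurable_update'.aemeasurable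

lemma map_resample_of_forall_update_eq [SFinite ρ] [IsMarkovKernel η] {β : Type*}
    [MeasurableSpace β] {g : (∀ i, X i) → β} (hg : Measurable g)
    (hgv : ∀ f x, g (Function.update f v x) = g f) :
    (resample ρ v η).map g = ρ.map g := by
  have : g ∘ (fun p : (∀ i, X i) × X v ↦ Function.update p.1 v p.2) = g ∘ Prod.fst :=
    funext fun p ↦ hgv p.1 p.2
  rw [resample, Measure.map_map hg measurable_update', this,
    ← Measure.map_map hg measurable_fst, ← Measure.fst, Measure.fst_compProd]

lemma map_eval_resample_of_ne [SFinite ρ] [IsMarkovKernel η] {i : ι} (hi : i ≠ v) :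
    (resample ρ v η).map (fun f ↦ f i) = ρ.map (fun f ↦ f i) :=
  map_resample_of_forall_update_eq (measurable_pi_apply i)
    fun _ _ ↦ Function.update_of_ne hi _ _

lemma map_eval_pair_resample_of_ne [SFinite ρ] [IsMarkovKernel η] {i j : ι} (hi : i ≠ v)
    (hj : j ≠ v) :
    (resample ρ v η).map (fun f ↦ (f i, f j)) = ρ.map (fun f ↦ (f i, f j)) :=
  map_resample_of_forall_update_eq ((measurable_pi_apply i).prodMk (measurable_pi_apply j))
    fun _ _ ↦ by rw [Function.update_of_ne hi, Function.update_of_ne hj]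

lemma map_eval_resample_const [IsProbabilityMeasure ρ] (μ : Measure (X v)) [SFinite μ] :
    (resample ρ v (Kernel.const _ μ)).map (fun f ↦ f v) = μ := by
  have : (fun f : ∀ i, X i ↦ f v) ∘ (fun p : (∀ i, X i) × X v ↦ Function.update p.1 v p.2) =
      Prod.snd :=
    funext fun p ↦ Function.update_self v p.2 p.1
  rw [resample, Measure.map_map (measurable_pi_apply v) measurable_update', this,
    Measure.compProd_const, ← Measure.snd, Measure.snd_prod]

lemma map_eval_pair_resample_comap [SFinite ρ] {u : ι} (huv : u ≠ v) (κ : Kernel (X u) (X v))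
    [IsMarkovKernel κ] :
    (resample ρ v (κ.comap (fun f ↦ f u) (measurable_pi_apply u))).map (fun f ↦ (f u, f v)) =
      ρ.map (fun f ↦ f u) ⊗ₘ κ := by
  have : (fun f : ∀ i, X i ↦ (f u, f v)) ∘
      (fun p : (∀ i, X i) × X v ↦ Function.update p.1 v p.2) = Prod.map (fun f ↦ f u) id :=
    funext fun p ↦ Prod.ext (Function.update_of_ne huv _ _) (Function.update_self _ _ _)
  rw [resample, Measure.map_map ((measurable_pi_apply u).prodMk (measurable_pi_apply v))
    measurable_update', this, Measure.map_prodMap_compProd_comap]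

end Resample

section Gluing

variable {ι : Type*} {X : ι → Type*} [∀ i, MeasurableSpace (X i)]
  {G : SimpleGraph ι} {ν : ∀ i, Measure (X i)} {ξ : ∀ i j, Measure (X i × X j)}
  {S : Set ι} {ρ : Measure (∀ i, X i)}

structure IsGluingOn (G : SimpleGraph ι) (ν : ∀ i, Measure (X i))
    (ξ : ∀ i j, Measure (X i × X j)) (S : Set ι) (ρ : Measure (∀ i, X i)) : Prop where
  isProbabilityMeasure : IsProbabilityMeasure ρ
  map_eval : ∀ i ∈ S, ρ.map (fun f ↦ f i) = ν i
  map_eval_pair : ∀ i ∈ S, ∀ j ∈ S, G.Adj i j → ρ.map (fun f ↦ (f i, f j)) = ξ i j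

lemma isGluingOn_empty_infinitePi [∀ i, IsProbabilityMeasure (ν i)] :
    IsGluingOn G ν ξ ∅ (Measure.infinitePi ν) :=
  ⟨inferInstance, by simp, by simp⟩

variable [DecidableEq ι]

lemma IsGluingOn.insert_resample (hρ : IsGluingOn G ν ξ S ρ) {v : ι}
    {η : Kernel (∀ i, X i) (X v)} [IsMarkovKernel η]
    (hv : (resample ρ v η).map (fun f ↦ f v) = ν v)
    (hadj : ∀ j ∈ S, G.Adj v j → (resample ρ v η).map (fun f ↦ (f v, f j)) = ξ v j ∧
      (resample ρ v η).map (fun f ↦ (f j, f v)) = ξ j v) :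
    IsGluingOn G ν ξ (insert v S) (resample ρ v η) := by
  have := hρ.isProbabilityMeasure
  have mem_of_ne {i : ι} (hi : i ∈ insert v S) (hiv : i ≠ v) : i ∈ S :=
    (Set.mem_insert_iff.1 hi).resolve_left hiv
  refine ⟨inferInstance, fun i hi ↦ ?_, fun i hi j hj hij ↦ ?_⟩
  · obtain rfl | hiv := eq_or_ne i v
    · exact hv
    · rw [map_eval_resample_of_ne hiv, hρ.map_eval i (mem_of_ne hi hiv)]
  · obtain rfl | hiv := eq_or_ne i v
    · exact (hadj j (mem_of_ne hj hij.ne.symm) hij).1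
    obtain rfl | hjv := eq_or_ne j v
    · exact (hadj i (mem_of_ne hi hiv) hij.symm).2
    rw [map_eval_pair_resample_of_ne hiv hjv,
      hρ.map_eval_pair i (mem_of_ne hi hiv) j (mem_of_ne hj hjv) hij]

lemma IsGluingOn.insert_of_forall_not_adj (hρ : IsGluingOn G ν ξ S ρ) {v : ι}
    [IsProbabilityMeasure (ν v)] (hv : ∀ j ∈ S, ¬ G.Adj v j) :
    IsGluingOn G ν ξ (insert v S) (resample ρ v (Kernel.const _ (ν v))) :=
  have := hρ.isProbabilityMeasure
  hρ.insert_resample (map_eval_resample_const _) fun j hj hvj ↦ absurd hvj (hv j hj)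

lemma IsGluingOn.insert_of_adj (hρ : IsGluingOn G ν ξ S ρ) {u v : ι} (hu : u ∈ S)
    (huv : G.Adj u v) (hleaf : ∀ j ∈ S, G.Adj v j → j = u) (κ : Kernel (X u) (X v))
    [IsMarkovKernel κ] (hκ : ν u ⊗ₘ κ = ξ u v) (hsnd : (ξ u v).map Prod.snd = ν v)
    (hswap : (ξ u v).map Prod.swap = ξ v u) :
    IsGluingOn G ν ξ (insert v S)
      (resample ρ v (κ.comap (fun f ↦ f u) (measurable_pi_apply u))) := by
  have := hρ.isProbabilityMeasure
  have hpair : (resample ρ v (κ.comap (fun f ↦ f u) (measurable_pi_apply u))).map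
      (fun f ↦ (f u, f v)) = ξ u v := by
    rw [map_eval_pair_resample_comap huv.ne, hρ.map_eval u hu, hκ]
  have hmeas : Measurable fun f : ∀ i, X i ↦ (f u, f v) :=
    (measurable_pi_apply u).prodMk (measurable_pi_apply v)
  refine hρ.insert_resample ?_ fun j hj hvj ↦ ?_
  · rw [← hsnd, ← hpair, Measure.map_map measurable_snd hmeas]
    rfl
  · obtain rfl := hleaf j hj hvj
    refine ⟨?_, hpair⟩
    rw [← hswap, ← hpair, Measure.map_map measurable_swap hmeas]
    rfl

theorem SimpleGraph.IsAcyclic.exists_isGluingOn [∀ i, IsProbabilityMeasure (ν i)]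
    (hG : G.IsAcyclic)
    (hdis : ∀ u v, G.Adj u v → ∃ κ : Kernel (X u) (X v), IsMarkovKernel κ ∧ ν u ⊗ₘ κ = ξ u v)
    (hsnd : ∀ u v, G.Adj u v → (ξ u v).map Prod.snd = ν v)
    (hswap : ∀ u v, G.Adj u v → (ξ u v).map Prod.swap = ξ v u) (S : Finset ι) :
    ∃ ρ, IsGluingOn G ν ξ S ρ := by
  induction S using Finset.strongInduction with | H S ih => ?_
  rcases S.eq_empty_or_nonempty with rfl | hS
  · exact ⟨_, by simpa using isGluingOn_empty_infinitePi⟩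
  obtain ⟨v, hvS, hleaf⟩ := hG.exists_mem_subsingleton_neighborSet_inter hS
  obtain ⟨ρ, hρ⟩ := ih _ (S.erase_ssubset hvS)
  rw [← Finset.insert_erase hvS, Finset.coe_insert]
  by_cases hnb : ∃ u ∈ S.erase v, G.Adj u v
  · obtain ⟨u, hu, huv⟩ := hnb
    obtain ⟨κ, hκ, hκξ⟩ := hdis u v huv
    exact ⟨_, hρ.insert_of_adj hu huv
      (fun j hj hvj ↦ hleaf ⟨hvj, Finset.mem_of_mem_erase hj⟩
        ⟨huv.symm, Finset.mem_of_mem_erase hu⟩) κ hκξ (hsnd u v huv) (hswap u v huv)⟩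
  · push Not at hnb
    exact ⟨_, hρ.insert_of_forall_not_adj fun j hj hvj ↦ hnb j hj hvj.symm⟩

end Gluing

theorem stmt_8_general (L : ℕ) (G : SimpleGraph (Fin L)) (hG : G.IsAcyclic)
    (𝒳 : Fin L → Type*) [∀ i, MeasurableSpace (𝒳 i)] [∀ i, StandardBorelSpace (𝒳 i)]
    (ν : ∀ i, Measure (𝒳 i)) [∀ i, IsProbabilityMeasure (ν i)]
    (ξ : ∀ i j, Measure (𝒳 i × 𝒳 j))
    (hξmarg : ∀ i j, G.Adj i j →
      (ξ i j).map Prod.fst = ν i ∧ (ξ i j).map Prod.snd = ν j)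
    (hξswap : ∀ i j, G.Adj i j → (ξ i j).map Prod.swap = ξ j i) :
    ∃ ρ : Measure (∀ i, 𝒳 i), IsProbabilityMeasure ρ ∧
      (∀ i, ρ.map (fun f => f i) = ν i) ∧
      (∀ i j, G.Adj i j → ρ.map (fun f => (f i, f j)) = ξ i j) := by
  have hdis : ∀ u v, G.Adj u v →
      ∃ κ : Kernel (𝒳 u) (𝒳 v), IsMarkovKernel κ ∧ ν u ⊗ₘ κ = ξ u v := fun u v huv ↦ by
    have : IsProbabilityMeasure ((ξ u v).map Prod.fst) := (hξmarg u v huv).1 ▸ inferInstance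
    have := Measure.isProbabilityMeasure_of_map (μ := ξ u v) Prod.fst
    have := nonempty_of_isProbabilityMeasure (ν v)
    refine ⟨(ξ u v).condKernel, inferInstance, ?_⟩
    rw [← (hξmarg u v huv).1]
    exact Measure.disintegrate _ _
  obtain ⟨ρ, hρ⟩ := hG.exists_isGluingOn hdis (fun u v huv ↦ (hξmarg u v huv).2) hξswap
    Finset.univ
  exact ⟨ρ, hρ.isProbabilityMeasure, fun i ↦ hρ.map_eval i (by simp),
    fun i j hij ↦ hρ.map_eval_pair i (by simp) j (by simp) hij⟩

/-- Gluing lemma for probability measures along a simple undirected acyclic graph. -/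
theorem stmt_8 (L : ℕ) (G : SimpleGraph (Fin L)) (hG : G.IsAcyclic)
    (𝒳 : Fin L → Type*) [∀ i, MeasurableSpace (𝒳 i)] [∀ i, StandardBorelSpace (𝒳 i)]
    [∀ i, Nonempty (𝒳 i)]
    (ν : ∀ i, Measure (𝒳 i)) [∀ i, IsProbabilityMeasure (ν i)]
    (ξ : ∀ i j, Measure (𝒳 i × 𝒳 j))
    (hξmarg : ∀ i j, G.Adj i j →
      (ξ i j).map Prod.fst = ν i ∧ (ξ i j).map Prod.snd = ν j)
    (hξswap : ∀ i j, G.Adj i j → (ξ i j).map Prod.swap = ξ j i) :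
    ∃ ρ : Measure (∀ i, 𝒳 i), IsProbabilityMeasure ρ ∧
      (∀ i, ρ.map (fun f => f i) = ν i) ∧
      (∀ i j, G.Adj i j → ρ.map (fun f => (f i, f j)) = ξ i j) :=
  stmt_8_general L G hG 𝒳 ν ξ hξmarg hξswap
end

section
/- Let X, Y be independent ℝ^d-valued random vectors with finite second moments, with X absolutely continuous with density f_X satisfying f_X(x) ≥ γ₁·exp(−γ₂‖x‖²) for all ‖x‖ ≥ M₂ := E‖Y‖², where γ₁, γ₂ > 0 and M₂ > 1. Then V := X + Y is absolutely continuous with a density f_V satisfying f_V(v) ≥ K₁·exp(−2γ₂‖v‖²) for all ‖v‖ ≥ 2M₂, where K₁ = γ₁·exp(−2γ₂M₂²)·(1 − 1/M₂) > 0. -/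
open MeasureTheory ProbabilityTheory
open scoped ENNReal

/-!
The law of `X + Y` has density `v ↦ ∫ f_X (v - y) dP_Y(y)`. For `‖v‖ ≥ 2M₂` keep only the
`y` with `‖y‖ ≤ M₂`: there `‖v - y‖ ≥ M₂`, so the Gaussian tail bound on `f_X` applies, and
`‖v - y‖² ≤ 2‖v‖² + 2M₂²`; by Chebyshev this ball has `P_Y`-mass at least `1 - 1/M₂`.
As `f_X` is not assumed measurable, it is first replaced by a measurable density that still
satisfies the tail bound everywhere.
-/

namespace MeasureTheory

theorem Measure.withDensity_conv_eq {G : Type*} [AddGroup G] [MeasurableSpace G]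
    [MeasurableAdd₂ G] [MeasurableNeg G] {μ : Measure G} [SFinite μ] [μ.IsAddRightInvariant]
    {f : G → ℝ≥0∞} (hf : Measurable f) (ν : Measure G) [SFinite ν] :
    μ.withDensity f ∗ ν = μ.withDensity fun x => ∫⁻ y, f (x - y) ∂ν := by
  refine ext_of_lintegral _ fun φ hφ => ?_
  have hg : Measurable fun x => ∫⁻ y, f (x - y) ∂ν := by fun_prop
  calc ∫⁻ z, φ z ∂(μ.withDensity f ∗ ν)
      = ∫⁻ x, ∫⁻ y, f x * φ (x + y) ∂ν ∂μ := by
        rw [lintegral_conv hφ, lintegral_withDensity_eq_lintegral_mul _ hf (by fun_prop)]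
        congr 1 with x
        exact (lintegral_const_mul _ (by fun_prop)).symm
    _ = ∫⁻ y, ∫⁻ x, f x * φ (x + y) ∂μ ∂ν := lintegral_lintegral_swap (by fun_prop)
    _ = ∫⁻ y, ∫⁻ x, f (x - y) * φ x ∂μ ∂ν := by
        congr 1 with y
        rw [← lintegral_add_right_eq_self (fun x => f (x - y) * φ x) y]
        simp only [add_sub_cancel_right]
    _ = ∫⁻ x, ∫⁻ y, f (x - y) * φ x ∂ν ∂μ := lintegral_lintegral_swap (by fun_prop)
    _ = ∫⁻ z, φ z ∂(μ.withDensity fun x => ∫⁻ y, f (x - y) ∂ν) := by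
        rw [lintegral_withDensity_eq_lintegral_mul _ hg hφ]
        congr 1 with x
        exact lintegral_mul_const _ (by fun_prop)

section Density

variable {α : Type*} [MeasurableSpace α] {μ ν : Measure α} {s : Set α}

theorem Measure.exists_measurable_density_ge_on [SigmaFinite μ] [SigmaFinite ν]
    {f φ : α → ℝ≥0∞} (hν : ν = μ.withDensity f) (hs : MeasurableSet s) (hφ : Measurable φ)
    (hφf : ∀ x ∈ s, φ x ≤ f x) :
    ∃ g, Measurable g ∧ (∀ x ∈ s, φ x ≤ g x) ∧ ν = μ.withDensity g := by
  have hνμ : ν ≪ μ := hν ▸ withDensity_absolutelyContinuous μ f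
  have hψf : s.indicator φ ≤ f := fun x => by
    by_cases hx : x ∈ s
    · simpa [hx] using hφf x hx
    · simp [hx]
  have hψ_rnDeriv : s.indicator φ ≤ᵐ[μ] ν.rnDeriv μ := by
    refine ae_le_of_forall_setLIntegral_le_of_sigmaFinite (hφ.indicator hs) fun t ht _ => ?_
    calc ∫⁻ x in t, s.indicator φ x ∂μ ≤ ∫⁻ x in t, f x ∂μ := lintegral_mono hψf
      _ = ∫⁻ x in t, ν.rnDeriv μ x ∂μ := by
        rw [← withDensity_apply _ ht, ← withDensity_apply _ ht, ← hν,
          Measure.withDensity_rnDeriv_eq ν μ hνμ]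
  refine ⟨ν.rnDeriv μ ⊔ s.indicator φ, (Measure.measurable_rnDeriv ν μ).sup (hφ.indicator hs),
    fun x hx => le_sup_of_le_right (Set.indicator_of_mem hx φ).ge,
    (Measure.withDensity_rnDeriv_eq ν μ hνμ).symm.trans (withDensity_congr_ae ?_)⟩
  exact hψ_rnDeriv.mono fun _ hx => (sup_eq_left.mpr hx).symm

theorem Measure.exists_real_density_ge_on [IsFiniteMeasure ν] {G : α → ℝ≥0∞}
    (hν : ν = μ.withDensity G) (hG : AEMeasurable G μ) {B : α → ℝ}
    (hB : ∀ᵐ x ∂μ, x ∈ s → ENNReal.ofReal (B x) ≤ G x) :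
    ∃ f : α → ℝ, ν = μ.withDensity (fun x => ENNReal.ofReal (f x)) ∧ ∀ x ∈ s, B x ≤ f x := by
  have hG_lt_top : ∀ᵐ x ∂μ, G x < ∞ := by
    refine ae_lt_top' hG ?_
    rw [← setLIntegral_univ, ← withDensity_apply _ MeasurableSet.univ, ← hν]
    exact measure_ne_top ν _
  refine ⟨fun x => max (G x).toReal (s.indicator B x), ?_,
    fun x hx => le_max_of_le_right (Set.indicator_of_mem hx B).ge⟩
  rw [hν]
  refine withDensity_congr_ae ?_
  filter_upwards [hG_lt_top, hB] with x hx_lt hx_le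
  have hB_le : s.indicator B x ≤ (G x).toReal := by
    by_cases hx : x ∈ s
    · simpa [hx] using (ENNReal.ofReal_le_iff_le_toReal hx_lt.ne).mp (hx_le hx)
    · simp [hx]
  rw [max_eq_left hB_le, ENNReal.ofReal_toReal hx_lt.ne]

end Density

theorem one_sub_integral_div_le_probReal_lt {Ω : Type*} [MeasurableSpace Ω] {μ : Measure Ω}
    [IsProbabilityMeasure μ] {f : Ω → ℝ} (hf₀ : 0 ≤ᵐ[μ] f) (hf : Integrable f μ) {t : ℝ}
    (ht : 0 < t) : 1 - (∫ ω, f ω ∂μ) / t ≤ μ.real {ω | f ω < t} := by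
  have hmarkov := mul_meas_ge_le_integral_of_nonneg hf₀ hf t
  have hcompl : μ.real {ω | t ≤ f ω} = 1 - μ.real {ω | f ω < t} := by
    rw [← probReal_compl_eq_one_sub₀ (nullMeasurableSet_lt hf.aemeasurable aemeasurable_const)]
    simp only [Set.compl_ofPred, not_lt]
  rw [sub_le_comm, le_div_iff₀ ht, ← hcompl]
  linarith

theorem ofReal_one_sub_div_sq_le_map_norm_le {Ω E : Type*} [MeasurableSpace Ω]
    {μ : Measure Ω} [IsProbabilityMeasure μ] [NormedAddCommGroup E] [MeasurableSpace E]
    {Y : Ω → E} (hY : AEMeasurable Y μ) (hY2 : Integrable (fun ω => ‖Y ω‖ ^ 2) μ) {r : ℝ}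
    (hr : 0 < r) :
    ENNReal.ofReal (1 - (∫ ω, ‖Y ω‖ ^ 2 ∂μ) / r ^ 2) ≤ μ.map Y {y | ‖y‖ ≤ r} :=
  calc ENNReal.ofReal (1 - (∫ ω, ‖Y ω‖ ^ 2 ∂μ) / r ^ 2)
      ≤ ENNReal.ofReal (μ.real {ω | ‖Y ω‖ ^ 2 < r ^ 2}) := ENNReal.ofReal_le_ofReal <|
        one_sub_integral_div_le_probReal_lt (ae_of_all μ fun ω => sq_nonneg ‖Y ω‖) hY2
          (pow_pos hr 2)
    _ = μ {ω | ‖Y ω‖ ^ 2 < r ^ 2} := ofReal_measureReal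
    _ ≤ μ (Y ⁻¹' {y | ‖y‖ ≤ r}) := measure_mono fun ω (hω : ‖Y ω‖ ^ 2 < r ^ 2) =>
        show ‖Y ω‖ ≤ r from (pow_lt_pow_iff_left₀ (norm_nonneg _) hr.le two_ne_zero).mp hω |>.le
    _ ≤ μ.map Y {y | ‖y‖ ≤ r} := Measure.le_map_apply hY _

end MeasureTheory

theorem exp_mul_exp_le_exp_neg_mul_norm_sub_sq {E : Type*} [SeminormedAddCommGroup E]
    {γ r : ℝ} (hγ : 0 ≤ γ) {v y : E} (hy : ‖y‖ ≤ r) :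
    Real.exp (-2 * γ * r ^ 2) * Real.exp (-2 * γ * ‖v‖ ^ 2) ≤ Real.exp (-γ * ‖v - y‖ ^ 2) := by
  have hsq : ‖v - y‖ ^ 2 ≤ 2 * ‖v‖ ^ 2 + 2 * r ^ 2 :=
    calc ‖v - y‖ ^ 2 ≤ (‖v‖ + ‖y‖) ^ 2 := by gcongr; exact norm_sub_le v y
      _ ≤ 2 * (‖v‖ ^ 2 + ‖y‖ ^ 2) := add_sq_le
      _ ≤ 2 * ‖v‖ ^ 2 + 2 * r ^ 2 := by nlinarith [norm_nonneg y]
  rw [← Real.exp_add, Real.exp_le_exp]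
  nlinarith

theorem gaussian_tail_le_lintegral_sub {E : Type*} [NormedAddCommGroup E] [MeasurableSpace E]
    [MeasurableSub E] (ν : Measure E) {g : E → ℝ≥0∞} (hg : Measurable g) {γ₁ γ₂ M p : ℝ}
    (hγ₁ : 0 ≤ γ₁) (hγ₂ : 0 ≤ γ₂)
    (hg_tail : ∀ x, M ≤ ‖x‖ → ENNReal.ofReal (γ₁ * Real.exp (-γ₂ * ‖x‖ ^ 2)) ≤ g x)
    (hp : ENNReal.ofReal p ≤ ν {y | ‖y‖ ≤ M}) {v : E} (hv : 2 * M ≤ ‖v‖) :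
    ENNReal.ofReal (γ₁ * Real.exp (-2 * γ₂ * M ^ 2) * p * Real.exp (-2 * γ₂ * ‖v‖ ^ 2))
      ≤ ∫⁻ y, g (v - y) ∂ν := by
  set c := ENNReal.ofReal (γ₁ * Real.exp (-2 * γ₂ * M ^ 2) * Real.exp (-2 * γ₂ * ‖v‖ ^ 2))
  have hball : {y : E | ‖y‖ ≤ M} ⊆ {y | c ≤ g (v - y)} := by
    intro y (hy : ‖y‖ ≤ M)
    have hvy : M ≤ ‖v - y‖ := by linarith [norm_sub_norm_le v y]
    refine le_trans (ENNReal.ofReal_le_ofReal ?_) (hg_tail _ hvy)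
    rw [mul_assoc]
    exact mul_le_mul_of_nonneg_left (exp_mul_exp_le_exp_neg_mul_norm_sub_sq hγ₂ hy) hγ₁
  calc ENNReal.ofReal (γ₁ * Real.exp (-2 * γ₂ * M ^ 2) * p * Real.exp (-2 * γ₂ * ‖v‖ ^ 2))
      = c * ENNReal.ofReal p := by rw [mul_right_comm _ p, ENNReal.ofReal_mul (by positivity)]
    _ ≤ c * ν {y | c ≤ g (v - y)} := by gcongr; exact hp.trans (measure_mono hball)
    _ ≤ ∫⁻ y, g (v - y) ∂ν := mul_meas_ge_le_lintegral₀ (by fun_prop) c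

theorem stmt_12_general {d : ℕ} {Ω : Type*} [MeasurableSpace Ω] (μ : Measure Ω)
    [IsProbabilityMeasure μ]
    (X Y : Ω → EuclideanSpace ℝ (Fin d)) (hXm : Measurable X) (hYm : Measurable Y)
    (hindep : IndepFun X Y μ)
    (hY2 : Integrable (fun ω => ‖Y ω‖ ^ 2) μ)
    (fX : EuclideanSpace ℝ (Fin d) → ℝ)
    (hfX : μ.map X = volume.withDensity (fun x => ENNReal.ofReal (fX x)))
    (γ₁ γ₂ : ℝ) (hγ₁ : 0 < γ₁) (hγ₂ : 0 < γ₂)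
    (hM : 1 < ∫ ω, ‖Y ω‖ ^ 2 ∂μ)
    (hanti : ∀ x : EuclideanSpace ℝ (Fin d), (∫ ω, ‖Y ω‖ ^ 2 ∂μ) ≤ ‖x‖ →
      γ₁ * Real.exp (-γ₂ * ‖x‖ ^ 2) ≤ fX x) :
    ∃ fV : EuclideanSpace ℝ (Fin d) → ℝ,
      μ.map (fun ω => X ω + Y ω) = volume.withDensity (fun v => ENNReal.ofReal (fV v)) ∧
      ∀ v : EuclideanSpace ℝ (Fin d), 2 * (∫ ω, ‖Y ω‖ ^ 2 ∂μ) ≤ ‖v‖ →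
        γ₁ * Real.exp (-2 * γ₂ * (∫ ω, ‖Y ω‖ ^ 2 ∂μ) ^ 2) * (1 - 1 / ∫ ω, ‖Y ω‖ ^ 2 ∂μ)
            * Real.exp (-2 * γ₂ * ‖v‖ ^ 2) ≤ fV v := by
  set M := ∫ ω, ‖Y ω‖ ^ 2 ∂μ
  have hM₀ : 0 < M := one_pos.trans hM
  obtain ⟨g, hg, hg_tail, hXg⟩ := Measure.exists_measurable_density_ge_on hfX
    (measurableSet_le measurable_const measurable_norm) (by fun_prop)
    fun x hx => ENNReal.ofReal_le_ofReal (hanti x hx)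
  have hV : μ.map (fun ω => X ω + Y ω)
      = volume.withDensity fun v => ∫⁻ y, g (v - y) ∂μ.map Y := by
    rw [← Measure.withDensity_conv_eq hg, ← hXg]
    exact hindep.map_add_eq_map_conv_map hXm hYm
  have hball : ENNReal.ofReal (1 - 1 / M) ≤ μ.map Y {y | ‖y‖ ≤ M} := by
    have := ofReal_one_sub_div_sq_le_map_norm_le hYm.aemeasurable hY2 hM₀
    rwa [pow_two, div_mul_cancel_left₀ hM₀.ne', inv_eq_one_div] at this
  exact Measure.exists_real_density_ge_on hV (by fun_prop) (s := {v | 2 * M ≤ ‖v‖}) <|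
    ae_of_all _ fun v hv => gaussian_tail_le_lintegral_sub _ hg hγ₁.le hγ₂.le hg_tail hball hv

/-- Anti-concentration is preserved under independent convolution. -/
theorem stmt_12 {d : ℕ} {Ω : Type*} [MeasurableSpace Ω] (μ : Measure Ω)
    [IsProbabilityMeasure μ]
    (X Y : Ω → EuclideanSpace ℝ (Fin d)) (hXm : Measurable X) (hYm : Measurable Y)
    (hindep : IndepFun X Y μ)
    (hX2 : Integrable (fun ω => ‖X ω‖ ^ 2) μ) (hY2 : Integrable (fun ω => ‖Y ω‖ ^ 2) μ)
    (fX : EuclideanSpace ℝ (Fin d) → ℝ)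
    (hfX : μ.map X = volume.withDensity (fun x => ENNReal.ofReal (fX x)))
    (γ₁ γ₂ : ℝ) (hγ₁ : 0 < γ₁) (hγ₂ : 0 < γ₂)
    (hM : 1 < ∫ ω, ‖Y ω‖ ^ 2 ∂μ)
    (hanti : ∀ x : EuclideanSpace ℝ (Fin d), (∫ ω, ‖Y ω‖ ^ 2 ∂μ) ≤ ‖x‖ →
      γ₁ * Real.exp (-γ₂ * ‖x‖ ^ 2) ≤ fX x) :
    ∃ fV : EuclideanSpace ℝ (Fin d) → ℝ,
      μ.map (fun ω => X ω + Y ω) = volume.withDensity (fun v => ENNReal.ofReal (fV v)) ∧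
      ∀ v : EuclideanSpace ℝ (Fin d), 2 * (∫ ω, ‖Y ω‖ ^ 2 ∂μ) ≤ ‖v‖ →
        γ₁ * Real.exp (-2 * γ₂ * (∫ ω, ‖Y ω‖ ^ 2 ∂μ) ^ 2) * (1 - 1 / ∫ ω, ‖Y ω‖ ^ 2 ∂μ)
            * Real.exp (-2 * γ₂ * ‖v‖ ^ 2) ≤ fV v :=
  stmt_12_general μ X Y hXm hYm hindep hY2 fX hfX γ₁ γ₂ hγ₁ hγ₂ hM hanti
end
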